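/- arXiv:2411.08775 — 4 statements merged into one kernel-verified Lean document; each statement's English description precedes it below -/
import Mathlib

section
/- Let m be a natural number and let V be a symmetric m×m matrix over the field 𝔽₂ = ZMod 2. Then there exist an invertible m×m matrix P over 𝔽₂ and a natural number k ≤ m such that the matrix W := PᵀVP satisfies: W i i = 1 for all indices i < k; W i i = 0 for all indices i ≥ k; and W i j = 0 whenever i ≠ j and at least one of i, j is < k. That is, every symmetric matrix over 𝔽₂ is congruent to a block diagonal sum of an identity matrix and a matrix with zero diagonal (an 'even' matrix). -/
/-!
If the diagonal of a symmetric `V` over `𝔽₂` vanishes, `V` is already even. Otherwise some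
diagonal entry is `1`; a permutation moves it to position `(0, 0)`, and the column operations
`cⱼ ↦ cⱼ - V 0 j • c₀` (with the matching row operations) clear the rest of the first row and
column, so `V` is congruent to `1 ⊕ A` with `A` symmetric. Induction on `A` finishes the proof.
-/

open Matrix

namespace Matrix

variable {R : Type*} {n : ℕ}

/-- The block diagonal matrix `c ⊕ A`. -/
def consBlock [Zero R] (c : R) (A : Matrix (Fin n) (Fin n) R) :
    Matrix (Fin (n + 1)) (Fin (n + 1)) R :=
  of (vecCons (vecCons c 0) fun i => vecCons 0 (A i))

section Zero

variable [Zero R] (c : R) (A : Matrix (Fin n) (Fin n) R)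

@[simp] lemma consBlock_zero_zero : consBlock c A 0 0 = c := rfl

@[simp] lemma consBlock_zero_succ (j : Fin n) : consBlock c A 0 j.succ = 0 := rfl

@[simp] lemma consBlock_succ_zero (i : Fin n) : consBlock c A i.succ 0 = 0 := rfl

@[simp] lemma consBlock_succ_succ (i j : Fin n) : consBlock c A i.succ j.succ = A i j := rfl

@[simp] lemma submatrix_succ_consBlock : (consBlock c A).submatrix Fin.succ Fin.succ = A := rfl

lemma transpose_consBlock : (consBlock c A)ᵀ = consBlock c Aᵀ := by
  ext i j
  cases i using Fin.cases <;> cases j using Fin.cases <;> rfl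

lemma eq_consBlock_of_row_col_eq_zero {W : Matrix (Fin (n + 1)) (Fin (n + 1)) R}
    (hrow : ∀ j : Fin n, W 0 j.succ = 0) (hcol : ∀ i : Fin n, W i.succ 0 = 0) :
    W = consBlock (W 0 0) (W.submatrix Fin.succ Fin.succ) := by
  ext i j
  cases i using Fin.cases <;> cases j using Fin.cases <;> simp [hrow, hcol]

end Zero

lemma consBlock_mul [NonUnitalNonAssocSemiring R] (a b : R) (A B : Matrix (Fin n) (Fin n) R) :
    consBlock a A * consBlock b B = consBlock (a * b) (A * B) := by
  ext i j
  cases i using Fin.cases <;> cases j using Fin.cases <;> simp [mul_apply, Fin.sum_univ_succ]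

lemma transpose_consBlock_one_mul_mul [NonAssocSemiring R] (c : R)
    (A Q : Matrix (Fin n) (Fin n) R) :
    (consBlock 1 Q)ᵀ * consBlock c A * consBlock 1 Q = consBlock c (Qᵀ * A * Q) := by
  rw [transpose_consBlock, consBlock_mul, consBlock_mul, one_mul, mul_one]

lemma det_consBlock [CommRing R] (c : R) (A : Matrix (Fin n) (Fin n) R) :
    (consBlock c A).det = c * A.det := by
  simp [det_succ_row_zero, Fin.sum_univ_succ]

lemma IsSymm.transpose_mul_mul {ι : Type*} [Fintype ι] [CommSemiring R] {V : Matrix ι ι R}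
    (hV : V.IsSymm) (P : Matrix ι ι R) : (Pᵀ * V * P).IsSymm := by
  simp [IsSymm, transpose_mul, hV.eq, Matrix.mul_assoc]

lemma transpose_permMatrix_mul_mul {ι : Type*} [Fintype ι] [DecidableEq ι] [NonAssocSemiring R]
    (σ : Equiv.Perm ι) (V : Matrix ι ι R) :
    (σ.permMatrix R)ᵀ * V * σ.permMatrix R = V.submatrix σ.symm σ.symm := by
  simp [PEquiv.toMatrix_toPEquiv_mul, PEquiv.mul_toMatrix_toPEquiv]

section Pivot

variable [CommRing R]

def firstRowClearing (r : Fin (n + 1) → R) : Matrix (Fin (n + 1)) (Fin (n + 1)) R :=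
  1 - vecMulVec (Pi.single 0 1) r

variable {r : Fin (n + 1) → R}

lemma isUnit_det_firstRowClearing (hr : r 0 = 0) : IsUnit (firstRowClearing r).det :=
  isUnit_det_of_right_inverse (B := 1 + vecMulVec (Pi.single 0 1) r) <| by
    simp [firstRowClearing, sub_mul, mul_add, vecMulVec_mul_vecMulVec, hr]

lemma transpose_firstRowClearing_mul_mul_apply_zero (hr : r 0 = 0)
    (V : Matrix (Fin (n + 1)) (Fin (n + 1)) R) (j : Fin (n + 1)) :
    ((firstRowClearing r)ᵀ * V * firstRowClearing r) 0 j = V 0 j - V 0 0 * r j := by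
  simp [firstRowClearing, transpose_sub, transpose_vecMulVec, sub_mul, mul_sub, vecMulVec_mul,
    mul_vecMulVec, vecMulVec_apply, hr]

lemma exists_transpose_mul_mul_eq_consBlock_of_isUnit_zero_zero
    {V : Matrix (Fin (n + 1)) (Fin (n + 1)) R} (hV : V.IsSymm) (h00 : IsUnit (V 0 0)) :
    ∃ P : Matrix (Fin (n + 1)) (Fin (n + 1)) R, IsUnit P.det ∧
      ∃ A : Matrix (Fin n) (Fin n) R, A.IsSymm ∧ Pᵀ * V * P = consBlock (V 0 0) A := by
  set r : Fin (n + 1) → R := Function.update (fun j => Ring.inverse (V 0 0) * V 0 j) 0 0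
  have hr : r 0 = 0 := Function.update_self ..
  set W := (firstRowClearing r)ᵀ * V * firstRowClearing r
  have hW : W.IsSymm := hV.transpose_mul_mul _
  have hrow (j : Fin n) : W 0 j.succ = 0 := by
    simp [W, r, transpose_firstRowClearing_mul_mul_apply_zero hr,
      Ring.mul_inverse_cancel_left _ _ h00]
  have h00 : W 0 0 = V 0 0 := by simp [W, transpose_firstRowClearing_mul_mul_apply_zero hr, hr]
  refine ⟨_, isUnit_det_firstRowClearing hr, _, hW.submatrix Fin.succ, ?_⟩
  rw [← h00]
  exact eq_consBlock_of_row_col_eq_zero hrow fun i => (hW.apply 0 i.succ).trans (hrow i)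

lemma exists_transpose_mul_mul_eq_consBlock_of_isUnit_diag
    {V : Matrix (Fin (n + 1)) (Fin (n + 1)) R} (hV : V.IsSymm) {p : Fin (n + 1)}
    (hp : IsUnit (V p p)) :
    ∃ P : Matrix (Fin (n + 1)) (Fin (n + 1)) R, IsUnit P.det ∧
      ∃ A : Matrix (Fin n) (Fin n) R, A.IsSymm ∧ Pᵀ * V * P = consBlock (V p p) A := by
  set σ := Equiv.swap 0 p
  have hσ : (σ.permMatrix R)ᵀ * V * σ.permMatrix R = V.submatrix σ σ := by
    rw [transpose_permMatrix_mul_mul, Equiv.symm_swap]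
  obtain ⟨P, hP, A, hA, hPA⟩ := exists_transpose_mul_mul_eq_consBlock_of_isUnit_zero_zero
    (hσ ▸ hV.transpose_mul_mul _) (by simpa [hσ, σ] using hp)
  refine ⟨σ.permMatrix R * P, ?_, A, hA, ?_⟩
  · rw [det_mul, det_permutation]
    exact ((Equiv.Perm.sign σ).isUnit.map (Int.castRingHom R)).mul hP
  · calc (σ.permMatrix R * P)ᵀ * V * (σ.permMatrix R * P)
        = Pᵀ * ((σ.permMatrix R)ᵀ * V * σ.permMatrix R) * P := by
          simp only [transpose_mul, Matrix.mul_assoc]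
      _ = consBlock (V p p) A := by rw [hσ, hPA]; simp [σ]

end Pivot

/-- `W = 1ₖ ⊕ E` with `E` even. -/
def IsIdentitySumEven [Zero R] [One R] {m : ℕ} (k : ℕ) (W : Matrix (Fin m) (Fin m) R) : Prop :=
  (∀ i : Fin m, (i : ℕ) < k → W i i = 1) ∧ (∀ i : Fin m, k ≤ (i : ℕ) → W i i = 0) ∧
    ∀ i j : Fin m, i ≠ j → ((i : ℕ) < k ∨ (j : ℕ) < k) → W i j = 0

lemma isIdentitySumEven_zero [Zero R] [One R] {m : ℕ} {W : Matrix (Fin m) (Fin m) R}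
    (hW : ∀ i, W i i = 0) : IsIdentitySumEven 0 W :=
  ⟨fun _ hi => absurd hi (Nat.not_lt_zero _), fun i _ => hW i, fun _ _ _ hk => by omega⟩

lemma IsIdentitySumEven.consBlock_one [Zero R] [One R] {k : ℕ} {A : Matrix (Fin n) (Fin n) R}
    (hA : IsIdentitySumEven k A) : IsIdentitySumEven (k + 1) (consBlock 1 A) := by
  obtain ⟨hone, hzero, hoff⟩ := hA
  refine ⟨fun i hi => ?_, fun i hi => ?_, fun i j hij hk => ?_⟩
  · cases i using Fin.cases with
    | zero => rfl
    | succ i => exact hone i (by simpa using hi)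
  · cases i using Fin.cases with
    | zero => simp at hi
    | succ i => exact hzero i (by simpa using hi)
  · cases i using Fin.cases <;> cases j using Fin.cases
    · exact absurd rfl hij
    · rfl
    · rfl
    · exact hoff _ _ (by simpa using hij) (by simpa using hk)

theorem exists_isIdentitySumEven_transpose_mul_mul {m : ℕ}
    {V : Matrix (Fin m) (Fin m) (ZMod 2)} (hV : V.IsSymm) :
    ∃ P : Matrix (Fin m) (Fin m) (ZMod 2), IsUnit P.det ∧
      ∃ k ≤ m, IsIdentitySumEven k (Pᵀ * V * P) := by
  induction m with
  | zero => exact ⟨1, by simp, 0, le_rfl, isIdentitySumEven_zero (fun i => i.elim0)⟩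
  | succ n ih =>
    by_cases hdiag : ∀ i, V i i = 0
    · exact ⟨1, by simp, 0, Nat.zero_le _, isIdentitySumEven_zero (by simpa using hdiag)⟩
    obtain ⟨p, hp⟩ := not_forall.mp hdiag
    have hp1 : V p p = 1 := (by decide : ∀ x : ZMod 2, x ≠ 0 → x = 1) _ hp
    obtain ⟨P, hP, A, hA, hPA⟩ :=
      exists_transpose_mul_mul_eq_consBlock_of_isUnit_diag hV (hp1 ▸ isUnit_one)
    obtain ⟨Q, hQ, k, hk, hkA⟩ := ih hA
    refine ⟨P * consBlock 1 Q, by simpa [det_mul, det_consBlock] using hP.mul hQ, k + 1,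
      by omega, ?_⟩
    have hcongr : (P * consBlock 1 Q)ᵀ * V * (P * consBlock 1 Q) = consBlock 1 (Qᵀ * A * Q) :=
      calc (P * consBlock 1 Q)ᵀ * V * (P * consBlock 1 Q)
          = (consBlock 1 Q)ᵀ * (Pᵀ * V * P) * consBlock 1 Q := by
            simp only [transpose_mul, Matrix.mul_assoc]
        _ = consBlock 1 (Qᵀ * A * Q) := by rw [hPA, hp1, transpose_consBlock_one_mul_mul]
    exact hcongr ▸ hkA.consBlock_one

end Matrix

/-- Every symmetric matrix over `𝔽₂` is congruent to a block diagonal sum of an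
identity matrix and an even matrix (a matrix with zero diagonal). -/
theorem symm_matrix_mod_two_congruent_diag_plus_even (m : ℕ)
    (V : Matrix (Fin m) (Fin m) (ZMod 2)) (hsymm : V.IsSymm) :
    ∃ P : Matrix (Fin m) (Fin m) (ZMod 2), IsUnit P.det ∧
      ∃ k : ℕ, k ≤ m ∧
        (∀ i : Fin m, (i : ℕ) < k → (Pᵀ * V * P) i i = 1) ∧
        (∀ i : Fin m, k ≤ (i : ℕ) → (Pᵀ * V * P) i i = 0) ∧
        (∀ i j : Fin m, i ≠ j → ((i : ℕ) < k ∨ (j : ℕ) < k) → (Pᵀ * V * P) i j = 0) :=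
  Matrix.exists_isIdentitySumEven_transpose_mul_mul hsymm
end

section
/- Let V be a symmetric m×m integer matrix with det V = 1 or det V = −1. Then there exists an m×m integer matrix P with det P ≠ 0 such that PᵀVP is a diagonal matrix (all off-diagonal entries are zero). -/
/-!
Over the fraction field a symmetric bilinear form has an orthogonal basis, so a symmetric
matrix is congruent to a diagonal one there. Clearing the denominators of the change-of-basis
matrix multiplies the congruent matrix by a nonzero scalar square, which keeps it diagonal and
makes the whole congruence integral.
-/

open Matrix

theorem Matrix.IsSymm.exists_isUnit_det_isDiag_transpose_mul_mul {K n : Type*} [Field K]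
    [Invertible (2 : K)] [Fintype n] [DecidableEq n] {A : Matrix n n K} (hA : A.IsSymm) :
    ∃ Q : Matrix n n K, IsUnit Q.det ∧ (Qᵀ * A * Q).IsDiag := by
  let b := Pi.basisFun K n
  obtain ⟨v, hv⟩ := LinearMap.BilinForm.exists_orthogonal_basis
    (LinearMap.BilinForm.isSymm_iff.mp (Matrix.isSymm_toBilin_iff_isSymm b |>.mpr hA))
  let c := v.reindex (v.indexEquiv b)
  refine ⟨b.toMatrix c, b.isUnit_det c, ?_⟩
  rw [← LinearMap.BilinForm.toMatrix_toBilin b A, LinearMap.BilinForm.toMatrix_mul_basis_toMatrix]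
  intro i j hij
  rw [LinearMap.BilinForm.toMatrix_apply]
  simp only [c, Module.Basis.reindex_apply]
  exact hv ((v.indexEquiv b).symm.injective.ne hij)

theorem Matrix.exists_map_algebraMap_eq_smul {R K m n : Type*} [CommRing R] [CommRing K]
    [Algebra R K] (S : Submonoid R) [IsLocalization S K] [Finite m] [Finite n] (Q : Matrix m n K) :
    ∃ (s : S) (P : Matrix m n R), P.map (algebraMap R K) = algebraMap R K s • Q := by
  obtain ⟨s, hs⟩ := IsLocalization.exist_integer_multiples_of_finite S
    fun p : m × n ↦ Q p.1 p.2
  choose P hP using hs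
  exact ⟨s, Matrix.of fun i j ↦ P (i, j),
    Matrix.ext fun i j ↦ (hP (i, j)).trans (Algebra.smul_def _ _)⟩

theorem Matrix.IsDiag.of_map {α β n : Type*} [Zero α] [Zero β] {A : Matrix n n α}
    {f : α → β} (hf : Function.Injective f) (hf0 : f 0 = 0) (h : (A.map f).IsDiag) : A.IsDiag :=
  fun _ _ hij ↦ hf <| (h hij).trans hf0.symm

theorem Matrix.IsSymm.exists_det_ne_zero_isDiag_transpose_mul_mul {R K n : Type*} [CommRing R]
    [IsDomain R] [Field K] [Algebra R K] [IsFractionRing R K] [Invertible (2 : K)] [Fintype n]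
    [DecidableEq n] {A : Matrix n n R} (hA : A.IsSymm) :
    ∃ P : Matrix n n R, P.det ≠ 0 ∧ (Pᵀ * A * P).IsDiag := by
  obtain ⟨Q, hQ, hQA⟩ := (hA.map (algebraMap R K)).exists_isUnit_det_isDiag_transpose_mul_mul
  obtain ⟨s, P, hP⟩ := Q.exists_map_algebraMap_eq_smul (nonZeroDivisors R)
  have hs : algebraMap R K s ≠ 0 := IsFractionRing.to_map_ne_zero_of_mem_nonZeroDivisors s.2
  refine ⟨P, fun h ↦ ?_, IsDiag.of_map (IsFractionRing.injective R K) (map_zero _) ?_⟩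
  · have hdet := (algebraMap R K).map_det P
    rw [h, map_zero, RingHom.mapMatrix_apply, hP, det_smul] at hdet
    exact mul_ne_zero (pow_ne_zero _ hs) hQ.ne_zero hdet.symm
  · rw [Matrix.map_mul, Matrix.map_mul, transpose_map, hP, transpose_smul, smul_mul, smul_mul,
      Matrix.mul_smul]
    exact (hQA.smul _).smul _

theorem exists_integral_diagonalization_general (m : ℕ)
    (V : Matrix (Fin m) (Fin m) ℤ) (hsymm : V.IsSymm) :
    ∃ P : Matrix (Fin m) (Fin m) ℤ, P.det ≠ 0 ∧ (Pᵀ * V * P).IsDiag :=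
  hsymm.exists_det_ne_zero_isDiag_transpose_mul_mul (K := ℚ)

/-- Every symmetric unimodular integer matrix is congruent over `ℚ` (via an integer
matrix with nonzero determinant) to an integral diagonal matrix. -/
theorem exists_integral_diagonalization (m : ℕ)
    (V : Matrix (Fin m) (Fin m) ℤ) (hsymm : V.IsSymm)
    (hdet : V.det = 1 ∨ V.det = -1) :
    ∃ P : Matrix (Fin m) (Fin m) ℤ, P.det ≠ 0 ∧ (Pᵀ * V * P).IsDiag :=
  exists_integral_diagonalization_general m V hsymm
end

section
/- Let m ≥ 1 and let V be a symmetric m×m integer matrix with det V = ±1 which is positive definite (i.e., xᵀVx > 0 for every nonzero real vector x). Let V⁻¹ denote its inverse, which is again an integer matrix. Then for every integer vector x ∈ ℤ^m one has ‖x‖₂ ≤ N₁(V⁻¹)·(xᵀVx), where ‖x‖₂ = sqrt(Σ_i x_i²) and N₁(A) := max over columns j of Σ_i |A i j|. -/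
/-!
Write `W = V⁻¹`, again positive definite. Since `x = W (V x)`, Cauchy–Schwarz for the form of `W`
gives `‖x‖⁴ = (xᵀ W (V x))² ≤ (xᵀ W x) (xᵀ V x)`, and `xᵀ W x ≤ N₁(W) ‖x‖²` because `W` is
symmetric. Hence `‖x‖² ≤ N₁(W) · xᵀ V x`, and `‖x‖ ≤ ‖x‖²` as `‖x‖²` is a nonnegative integer.
-/

open Matrix

variable {n : Type*} [Fintype n]

theorem sq_dotProduct_mulVec_le_of_posSemidef [DecidableEq n] {W : Matrix n n ℝ}
    (hW : W.PosSemidef) (a b : n → ℝ) :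
    (a ⬝ᵥ W *ᵥ b) ^ 2 ≤ (a ⬝ᵥ W *ᵥ a) * (b ⬝ᵥ W *ᵥ b) := by
  have hsymm : (toBilin' W).IsSymm :=
    isSymm_toBilin'_iff_isSymm.mpr (isHermitian_iff_isSymm.mp hW.isHermitian)
  simpa only [toBilin'_apply'] using (toBilin' W).apply_sq_le_of_symm
    (fun v ↦ by simpa only [toBilin'_apply', star_trivial] using hW.dotProduct_mulVec_nonneg v)
    (LinearMap.BilinForm.isSymm_iff.mp hsymm) a b

theorem dotProduct_mulVec_le_of_colSum_le {W : Matrix n n ℝ} (hW : W.IsSymm) {c : ℝ}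
    (hcol : ∀ j, ∑ i, |W i j| ≤ c) (v : n → ℝ) : v ⬝ᵥ W *ᵥ v ≤ c * (v ⬝ᵥ v) := by
  have hterm (i j : n) : v i * (W i j * v j) ≤ (|W i j| * v i ^ 2 + |W i j| * v j ^ 2) / 2 := by
    nlinarith [abs_mul_abs_self (W i j), sq_nonneg (v i - v j), sq_nonneg (v i + v j),
      le_abs_self (W i j), neg_abs_le (W i j)]
  have hswap : ∑ i, ∑ j, |W i j| * v i ^ 2 = ∑ i, ∑ j, |W i j| * v j ^ 2 := by
    rw [Finset.sum_comm]
    simp only [hW.apply]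
  calc v ⬝ᵥ W *ᵥ v = ∑ i, ∑ j, v i * (W i j * v j) := by
        simp only [dotProduct, mulVec, Finset.mul_sum]
    _ ≤ ∑ i, ∑ j, (|W i j| * v i ^ 2 + |W i j| * v j ^ 2) / 2 := by
        gcongr with i _ j _; exact hterm i j
    _ = ∑ j, (∑ i, |W i j|) * v j ^ 2 := by
        simp only [← Finset.sum_div, Finset.sum_add_distrib, hswap, Finset.sum_mul]
        rw [Finset.sum_comm]; ring
    _ ≤ ∑ j, c * v j ^ 2 := by gcongr with j; exact hcol j
    _ = c * (v ⬝ᵥ v) := by simp only [dotProduct, Finset.mul_sum, sq]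

theorem dotProduct_self_le_of_posDef [DecidableEq n] {A : Matrix n n ℝ} (hA : A.PosDef) {c : ℝ}
    (hcol : ∀ j, ∑ i, |A⁻¹ i j| ≤ c) (v : n → ℝ) : v ⬝ᵥ v ≤ c * (v ⬝ᵥ A *ᵥ v) := by
  rcases eq_or_ne v 0 with rfl | hv
  · simp
  have hAinv := hA.inv
  have hv_eq : A⁻¹ *ᵥ (A *ᵥ v) = v := by
    rw [mulVec_mulVec, nonsing_inv_mul A ((isUnit_iff_isUnit_det A).mp hA.isUnit), one_mulVec]
  have key : (v ⬝ᵥ v) * (v ⬝ᵥ v) ≤ (c * (v ⬝ᵥ A *ᵥ v)) * (v ⬝ᵥ v) :=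
    calc (v ⬝ᵥ v) * (v ⬝ᵥ v) = (v ⬝ᵥ A⁻¹ *ᵥ (A *ᵥ v)) ^ 2 := by rw [hv_eq, sq]
      _ ≤ (v ⬝ᵥ A⁻¹ *ᵥ v) * ((A *ᵥ v) ⬝ᵥ A⁻¹ *ᵥ (A *ᵥ v)) :=
        sq_dotProduct_mulVec_le_of_posSemidef hAinv.posSemidef v (A *ᵥ v)
      _ ≤ (c * (v ⬝ᵥ v)) * (v ⬝ᵥ A *ᵥ v) := by
        rw [hv_eq, dotProduct_comm (A *ᵥ v)]
        gcongr
        · simpa only [star_trivial] using hA.posSemidef.dotProduct_mulVec_nonneg v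
        · exact dotProduct_mulVec_le_of_colSum_le
            (isHermitian_iff_isSymm.mp hAinv.isHermitian) hcol v
      _ = (c * (v ⬝ᵥ A *ᵥ v)) * (v ⬝ᵥ v) := by ring
  exact le_of_mul_le_mul_right key (dotProduct_self_star_pos_iff.mpr hv)

theorem Matrix.map_nonsing_inv {R S : Type*} [DecidableEq n] [CommRing R] [CommRing S]
    (f : R →+* S) {V : Matrix n n R} (h : IsUnit V.det) : V⁻¹.map f = (V.map f)⁻¹ := by
  refine (inv_eq_left_inv ?_).symm
  rw [← Matrix.map_mul, nonsing_inv_mul V h, Matrix.map_one f f.map_zero f.map_one]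

theorem Real.sqrt_intCast_le {k : ℤ} (hk : 0 ≤ k) : √(k : ℝ) ≤ k := by
  rcases hk.eq_or_lt with rfl | hk
  · simp
  · exact Real.sqrt_le_self_iff.mpr (Or.inr (by exact_mod_cast hk))

theorem norm_le_of_posDef_unimodular_general (m : ℕ) (hm : 1 ≤ m)
    (V : Matrix (Fin m) (Fin m) ℤ)
    (hdet : V.det = 1 ∨ V.det = -1)
    (hpos : (V.map ((↑) : ℤ → ℝ)).PosDef) :
    ∀ x : Fin m → ℤ,
      Real.sqrt (∑ i : Fin m, ((x i : ℝ)) ^ 2) ≤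
        ((Finset.univ.sup' (Finset.univ_nonempty_iff.mpr ⟨⟨0, hm⟩⟩)
            (fun j : Fin m => ∑ i : Fin m, |V⁻¹ i j|) : ℤ) : ℝ) *
          ((x ⬝ᵥ V.mulVec x : ℤ) : ℝ) := by
  intro x
  set N := Finset.univ.sup' (Finset.univ_nonempty_iff.mpr ⟨⟨0, hm⟩⟩)
    (fun j : Fin m => ∑ i : Fin m, |V⁻¹ i j|)
  have hunit : IsUnit V.det := by rcases hdet with h | h <;> simp [h]
  have hinv : (V.map ((↑) : ℤ → ℝ))⁻¹ = V⁻¹.map (↑) :=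
    (Matrix.map_nonsing_inv (Int.castRingHom ℝ) hunit).symm
  have hcol (j : Fin m) : ∑ i, |(V.map ((↑) : ℤ → ℝ))⁻¹ i j| ≤ (N : ℝ) := by
    simp only [hinv, map_apply]
    exact_mod_cast Finset.le_sup' (fun j => ∑ i, |V⁻¹ i j|) (Finset.mem_univ j)
  calc √(∑ i, (x i : ℝ) ^ 2) = √((∑ i, x i ^ 2 : ℤ) : ℝ) := by push_cast; rfl
    _ ≤ ((∑ i, x i ^ 2 : ℤ) : ℝ) := Real.sqrt_intCast_le (by positivity)
    _ = ((↑) ∘ x) ⬝ᵥ ((↑) ∘ x) := by simp [dotProduct, sq]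
    _ ≤ N * (((↑) ∘ x) ⬝ᵥ V.map (↑) *ᵥ ((↑) ∘ x)) := dotProduct_self_le_of_posDef hpos hcol _
    _ = N * ((x ⬝ᵥ V *ᵥ x : ℤ) : ℝ) := by
        simp only [dotProduct, mulVec, Function.comp_apply, map_apply]
        push_cast
        rfl

/-- For a positive definite, symmetric, unimodular integer matrix `V`, the Euclidean
norm of any integer vector `x` is bounded by `N₁(V⁻¹) · (xᵀVx)`. -/
theorem norm_le_of_posDef_unimodular (m : ℕ) (hm : 1 ≤ m)
    (V : Matrix (Fin m) (Fin m) ℤ) (hsymm : V.IsSymm)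
    (hdet : V.det = 1 ∨ V.det = -1)
    (hpos : (V.map ((↑) : ℤ → ℝ)).PosDef) :
    ∀ x : Fin m → ℤ,
      Real.sqrt (∑ i : Fin m, ((x i : ℝ)) ^ 2) ≤
        ((Finset.univ.sup' (Finset.univ_nonempty_iff.mpr ⟨⟨0, hm⟩⟩)
            (fun j : Fin m => ∑ i : Fin m, |V⁻¹ i j|) : ℤ) : ℝ) *
          ((x ⬝ᵥ V.mulVec x : ℤ) : ℝ) :=
  norm_le_of_posDef_unimodular_general m hm V hdet hpos
end

section
/- For every natural number m, the predicate on m×m integer matrices V asserting 'V is symmetric and positive definite (i.e., xᵀVx > 0 for every nonzero real vector x)' is decidable in the computability-theoretic sense: it is a ComputablePred with respect to the canonical encoding of integer matrices. In particular, there exists an algorithm that takes as input an integral symmetric matrix and outputs whether or not it is positive definite. -/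
/-!
By Sylvester's criterion a Hermitian matrix is positive definite iff all its leading principal
minors are positive. The induction step reads the matrix in blocks: if the leading block of size
`n` is positive definite, the Schur complement is a `1 × 1` matrix whose entry is
`det A / det A₁₁`, so `det A > 0` makes `A` positive semidefinite and invertible.

For an integer matrix the minors are integers, computed by Laplace expansion, and symmetry is a
comparison of finitely many entries. So the predicate is primitive recursive once integer
addition, multiplication and order are; these reduce to natural-number arithmetic by writing
`z = z.toNat - (-z).toNat`, both parts being read off from the encoding of `z`.
-/

open Matrix
open scoped ComplexOrder

theorem Int.encode_eq (z : ℤ) :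
    Encodable.encode z = if 0 ≤ z then 2 * z.toNat else 2 * (-z).toNat - 1 := by
  rcases z with n | n
  · show 2 * n = _
    simp
  · show 2 * n + 1 = _
    rw [if_neg (Int.negSucc_lt_zero n).not_ge]
    simp [Int.negSucc_eq]
    omega

namespace Primrec

theorem int_toNat : Primrec Int.toNat := by
  have h : Primrec fun z : ℤ =>
      if Encodable.encode z % 2 = 0 then Encodable.encode z / 2 else 0 :=
    ite (Primrec.eq.comp (nat_mod.comp Primrec.encode (const 2)) (const 0))
      (nat_div.comp Primrec.encode (const 2)) (const 0)
  exact h.of_eq fun z => by have := Int.encode_eq z; split_ifs at this ⊢ <;> omega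

theorem int_neg_toNat : Primrec fun z : ℤ => (-z).toNat := by
  have h : Primrec fun z : ℤ =>
      if Encodable.encode z % 2 = 0 then 0 else (Encodable.encode z + 1) / 2 :=
    ite (Primrec.eq.comp (nat_mod.comp Primrec.encode (const 2)) (const 0))
      (const 0) (nat_div.comp (succ.comp Primrec.encode) (const 2))
  exact h.of_eq fun z => by have := Int.encode_eq z; split_ifs at this ⊢ <;> omega

theorem int_natCast_sub : Primrec₂ fun a b : ℕ => (a : ℤ) - b := by
  have h : Primrec fun p : ℕ × ℕ =>
      if p.2 ≤ p.1 then 2 * (p.1 - p.2) else 2 * (p.2 - p.1) - 1 :=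
    ite (nat_le.comp snd fst)
      (nat_mul.comp (const 2) (nat_sub.comp fst snd))
      (nat_sub.comp (nat_mul.comp (const 2) (nat_sub.comp snd fst)) (const 1))
  refine encode_iff.1 (h.of_eq fun p => ?_)
  have := Int.encode_eq ((p.1 : ℤ) - p.2)
  dsimp only
  split_ifs at this ⊢ <;> omega

theorem int_add : Primrec₂ ((· + ·) : ℤ → ℤ → ℤ) := by
  have h : Primrec fun p : ℤ × ℤ =>
      ((p.1.toNat + p.2.toNat : ℕ) : ℤ) - ((-p.1).toNat + (-p.2).toNat : ℕ) :=
    int_natCast_sub.comp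
      (nat_add.comp (int_toNat.comp fst) (int_toNat.comp snd))
      (nat_add.comp (int_neg_toNat.comp fst) (int_neg_toNat.comp snd))
  exact h.of_eq fun p => by push_cast; omega

theorem int_mul : Primrec₂ ((· * ·) : ℤ → ℤ → ℤ) := by
  have h : Primrec fun p : ℤ × ℤ =>
      ((p.1.toNat * p.2.toNat + (-p.1).toNat * (-p.2).toNat : ℕ) : ℤ) -
        (p.1.toNat * (-p.2).toNat + (-p.1).toNat * p.2.toNat : ℕ) := by
    have pa := int_toNat.comp (fst (α := ℤ) (β := ℤ))
    have na := int_neg_toNat.comp (fst (α := ℤ) (β := ℤ))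
    have pb := int_toNat.comp (snd (α := ℤ) (β := ℤ))
    have nb := int_neg_toNat.comp (snd (α := ℤ) (β := ℤ))
    exact int_natCast_sub.comp
      (nat_add.comp (nat_mul.comp pa pb) (nat_mul.comp na nb))
      (nat_add.comp (nat_mul.comp pa nb) (nat_mul.comp na pb))
  refine h.of_eq fun p => ?_
  have h₁ : (p.1.toNat : ℤ) - (-p.1).toNat = p.1 := by omega
  have h₂ : (p.2.toNat : ℤ) - (-p.2).toNat = p.2 := by omega
  push_cast
  linear_combination ((p.2.toNat : ℤ) - (-p.2).toNat) * h₁ + p.1 * h₂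

theorem int_lt : PrimrecRel ((· < ·) : ℤ → ℤ → Prop) :=
  (nat_lt.comp (nat_add.comp (int_toNat.comp fst) (int_neg_toNat.comp snd))
    (nat_add.comp (int_toNat.comp snd) (int_neg_toNat.comp fst))).of_eq fun _ => by omega

variable {α σ R : Type*} [Primcodable α] [Primcodable σ] [Primcodable R]

theorem fin_sum [AddCommMonoid R] (hadd : Primrec₂ ((· + ·) : R → R → R)) :
    ∀ {n} {f : Fin n → α → R}, (∀ i, Primrec (f i)) → Primrec fun a => ∑ i, f i a
  | 0, _, _ => (const 0).of_eq fun _ => by simp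
  | _ + 1, _, hf => (hadd.comp (hf 0) (fin_sum hadd fun i => hf i.succ)).of_eq fun _ => by
      simp [Fin.sum_univ_succ]

theorem matrix_entry {m n : ℕ} (i : Fin m) (j : Fin n) :
    Primrec fun M : Fin m → Fin n → σ => M i j :=
  fin_app.comp (fin_app.comp Primrec.id (const i)) (const j)

theorem matrix_submatrix {m n k l : ℕ} (f : Fin k → Fin m) (g : Fin l → Fin n) :
    Primrec fun M : Fin m → Fin n → σ => fun a b => M (f a) (g b) :=
  fin_curry.2 <| fin_curry.2 <| fin_app.comp
    (fin_app.comp (fst.comp fst) ((dom_finite f).comp (snd.comp fst)))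
    ((dom_finite g).comp snd)

theorem matrix_transpose {m n : ℕ} : Primrec fun M : Fin m → Fin n → σ => fun a b => M b a :=
  fin_curry.2 <| fin_curry.2 <| fin_app.comp (fin_app.comp (fst.comp fst) snd) (snd.comp fst)

theorem matrix_det [CommRing R] (hadd : Primrec₂ ((· + ·) : R → R → R))
    (hmul : Primrec₂ ((· * ·) : R → R → R)) :
    ∀ n, Primrec fun M : Fin n → Fin n → R => (Matrix.of M).det
  | 0 => (const 1).of_eq fun _ => by simp
  | n + 1 => (fin_sum hadd fun j => hmul.comp (hmul.comp (const _) (matrix_entry 0 j))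
      ((matrix_det hadd hmul n).comp (matrix_submatrix Fin.succ j.succAbove))).of_eq fun M => by
    rw [det_succ_row_zero]
    rfl

end Primrec

theorem PrimrecPred.forall_fin {α : Type*} [Primcodable α] :
    ∀ {n} {p : Fin n → α → Prop}, (∀ i, PrimrecPred (p i)) → PrimrecPred fun a => ∀ i, p i a
  | 0, _, _ => (Primrec.primrecPred (p := fun _ : α => True) (.const true)).of_eq fun _ => by simp
  | _ + 1, _, hp => ((hp 0).and (forall_fin fun i => hp i.succ)).of_eq fun _ => by
      simp [Fin.forall_fin_succ]

namespace Matrix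

theorem posSemidef_of_unique {R o : Type*} [CommRing R] [PartialOrder R] [StarRing R]
    [StarOrderedRing R] [Fintype o] [Unique o] [DecidableEq o] {S : Matrix o o R}
    (h : 0 ≤ S default default) : S.PosSemidef := by
  have hS : S = diagonal fun _ => S default default := by
    ext i j
    simp [Subsingleton.elim i default, Subsingleton.elim j default]
  rw [hS]
  exact .diagonal fun _ => h

variable {𝕜 : Type*} [RCLike 𝕜]

theorem IsHermitian.posDef_of_posDef_toBlocks₁₁ {m o : Type*} [Fintype m] [DecidableEq m]
    [Fintype o] [Unique o] [DecidableEq o] {M : Matrix (m ⊕ o) (m ⊕ o) 𝕜}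
    (hM : M.IsHermitian) (h₁₁ : M.toBlocks₁₁.PosDef) (hdet : 0 < M.det) : M.PosDef := by
  let := h₁₁.isUnit.invertible
  have hblocks : M = Matrix.fromBlocks M.toBlocks₁₁ M.toBlocks₁₂ M.toBlocks₁₂ᴴ M.toBlocks₂₂ := by
    rw [← fromBlocks_toBlocks M] at hM
    rw [(isHermitian_fromBlocks_iff.1 hM).2.1, fromBlocks_toBlocks]
  set S := M.toBlocks₂₂ - M.toBlocks₁₂ᴴ * M.toBlocks₁₁⁻¹ * M.toBlocks₁₂
  have hS : 0 < S default default := by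
    have hsplit : M.det = M.toBlocks₁₁.det * S.det := by
      conv_lhs => rw [hblocks]
      rw [det_fromBlocks₁₁, invOf_eq_nonsing_inv]
    rw [hsplit] at hdet
    rw [← det_unique S]
    exact pos_of_mul_pos_right hdet h₁₁.det_pos.le
  have hpsd : M.PosSemidef := by
    rw [hblocks]
    exact (PosDef.fromBlocks₁₁ _ _ h₁₁).2 (posSemidef_of_unique hS.le)
  exact hpsd.posDef_iff_det_ne_zero.2 hdet.ne'

def leadingSubmatrix {α : Type*} {n : ℕ} (A : Matrix (Fin n) (Fin n) α) (k : ℕ) (hk : k ≤ n) :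
    Matrix (Fin k) (Fin k) α :=
  A.submatrix (Fin.castLE hk) (Fin.castLE hk)

theorem leadingSubmatrix_leadingSubmatrix {α : Type*} {n : ℕ} (A : Matrix (Fin n) (Fin n) α)
    {k l : ℕ} (hk : k ≤ n) (hl : l ≤ k) :
    (A.leadingSubmatrix k hk).leadingSubmatrix l hl = A.leadingSubmatrix l (hl.trans hk) :=
  rfl

theorem leadingSubmatrix_self {α : Type*} {n : ℕ} (A : Matrix (Fin n) (Fin n) α) :
    A.leadingSubmatrix n le_rfl = A := by
  simp [leadingSubmatrix]

theorem PosDef.leadingSubmatrix {R : Type*} [Ring R] [PartialOrder R] [StarRing R] {n : ℕ}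
    {A : Matrix (Fin n) (Fin n) R} (hA : A.PosDef) (k : ℕ) (hk : k ≤ n) :
    (A.leadingSubmatrix k hk).PosDef :=
  hA.submatrix (Fin.castLE_injective hk)

/-- **Sylvester's criterion**. -/
theorem IsHermitian.posDef_iff_forall_det_leadingSubmatrix_pos {n : ℕ}
    {A : Matrix (Fin n) (Fin n) 𝕜} (hA : A.IsHermitian) :
    A.PosDef ↔ ∀ k (hk : k ≤ n), 0 < (A.leadingSubmatrix k hk).det := by
  refine ⟨fun h k hk => (h.leadingSubmatrix k hk).det_pos, fun h => ?_⟩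
  induction n with
  | zero => exact ⟨hA, fun x hx => absurd (Subsingleton.elim x 0) hx⟩
  | succ n ih =>
    let e : Fin n ⊕ Fin 1 ≃ Fin (n + 1) := finSumFinEquiv
    have h₁₁ : (A.submatrix e e).toBlocks₁₁ = A.leadingSubmatrix n n.le_succ := rfl
    have hB : (A.leadingSubmatrix n n.le_succ).PosDef :=
      ih (hA.submatrix _) fun k hk => by
        simpa only [leadingSubmatrix_leadingSubmatrix] using h k (hk.trans n.le_succ)
    have hM : (A.submatrix e e).PosDef := by
      refine (hA.submatrix e).posDef_of_posDef_toBlocks₁₁ (h₁₁ ▸ hB) ?_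
      rw [det_submatrix_equiv_self]
      simpa only [leadingSubmatrix_self] using h (n + 1) le_rfl
    simpa using hM.submatrix e.symm.injective

end Matrix

/-- The predicate "an integer matrix is symmetric and positive definite" is
computably decidable. -/
theorem computablePred_posDef (m : ℕ) :
    ComputablePred fun V : Fin m → Fin m → ℤ =>
      (Matrix.of V).IsSymm ∧ ((Matrix.of V).map ((↑) : ℤ → ℝ)).PosDef := by
  have hsymm : PrimrecPred fun V : Fin m → Fin m → ℤ => (Matrix.of V).IsSymm :=
    (Primrec.eq.comp (Primrec.matrix_transpose (m := m) (n := m) (σ := ℤ)) .id).of_eq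
      fun _ => Iff.rfl
  have hminors : PrimrecPred fun V : Fin m → Fin m → ℤ =>
      ∀ k : Fin (m + 1), 0 < ((Matrix.of V).leadingSubmatrix k k.is_le).det :=
    PrimrecPred.forall_fin fun k => Primrec.int_lt.comp (.const 0)
      ((Primrec.matrix_det Primrec.int_add Primrec.int_mul k).comp
        (Primrec.matrix_submatrix _ _))
  refine (hsymm.and hminors).computablePred.of_eq fun V => and_congr_right fun hV => ?_
  have hcast : ∀ k (hk : k ≤ m), (((Matrix.of V).map ((↑) : ℤ → ℝ)).leadingSubmatrix k hk).det =
      ((Matrix.of V).leadingSubmatrix k hk).det :=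
    fun k hk => ((Int.castRingHom ℝ).map_det _).symm
  rw [(isHermitian_iff_isSymm.2 (hV.map _)).posDef_iff_forall_det_leadingSubmatrix_pos]
  simp only [hcast, Int.cast_pos]
  exact ⟨fun h k hk => h ⟨k, Nat.lt_succ_of_le hk⟩, fun h k => h k k.is_le⟩
end
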